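/- Let B be a Banach A-bimodule and let n ≥ 2 be an even integer. If e^(n) ∈ A^(n) is a left unit A^(n)-module for B^(n) (i.e., e^(n)b^(n) = b^(n) for all b^(n) ∈ B^(n)) and e^(n) belongs to the left weak topological center Z̃ℓ_{B^(n)}(A^(n)) = {a^(n) ∈ A^(n) : b^(n) ↦ a^(n)b^(n) is weak*-to-weak continuous from B^(n) to B^(n)}, then B is a reflexive Banach space. -/

import Mathlib

open NormedSpace Filter Topology

noncomputable section

universe u

/-- The Arens adjoint of a bounded bilinear map `m : X × Y → Z`:
`⟨adjB m z' x, y⟩ = ⟨z', m x y⟩`.  Its triple iterate `adjB (adjB (adjB m))` is the Arens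
(triple adjoint) extension `m*** : X** × Y** → Z**`. -/
def adjB {X Y Z : Type*} [NormedAddCommGroup X] [NormedSpace ℂ X]
    [NormedAddCommGroup Y] [NormedSpace ℂ Y] [NormedAddCommGroup Z] [NormedSpace ℂ Z]
    (m : X →L[ℂ] Y →L[ℂ] Z) : StrongDual ℂ Z →L[ℂ] X →L[ℂ] StrongDual ℂ Y :=
  ((ContinuousLinearMap.compL ℂ X (Y →L[ℂ] Z) (Y →L[ℂ] ℂ)).flip m).comp
    (ContinuousLinearMap.compL ℂ Y Z ℂ)

/-- A pair consisting of a Banach algebra (carrier `X`, multiplication `mul`) and a Banach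
`X`-bimodule (carrier `Y`, left action `pl`, right action `pr`), recorded through its bounded
(bi)linear structure maps. -/
structure APair : Type (u + 1) where
  X : Type u
  Y : Type u
  [nX : NormedAddCommGroup X]
  [mX : NormedSpace ℂ X]
  [nY : NormedAddCommGroup Y]
  [mY : NormedSpace ℂ Y]
  mul : X →L[ℂ] X →L[ℂ] X
  pl : X →L[ℂ] Y →L[ℂ] Y
  pr : Y →L[ℂ] X →L[ℂ] Y

attribute [instance] APair.nX APair.mX APair.nY APair.mY

/-- Passage to biduals: `X ↦ X**`, `Y ↦ Y**`, with the first Arens product on `X**` and the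
Arens triple-adjoint extensions of the module actions. -/
def APair.bidual (P : APair) : APair where
  X := StrongDual ℂ (StrongDual ℂ P.X)
  Y := StrongDual ℂ (StrongDual ℂ P.Y)
  mul := adjB (adjB (adjB P.mul))
  pl := adjB (adjB (adjB P.pl))
  pr := adjB (adjB (adjB P.pr))

/-- `P.iter k` is the `2k`-th dual level of the pair `P`: the Banach algebra `A^(2k)` acting on
the Banach bimodule `B^(2k)`. -/
def APair.iter (P : APair) : ℕ → APair
  | 0 => P
  | k + 1 => (P.iter k).bidual

variable (A B : Type u) [NonUnitalNormedRing A] [NormedSpace ℂ A]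
  [SMulCommClass ℂ A A] [IsScalarTower ℂ A A] [CompleteSpace A]
  [NormedAddCommGroup B] [NormedSpace ℂ B] [CompleteSpace B]

variable (πl : A →L[ℂ] B →L[ℂ] B) (πr : B →L[ℂ] A →L[ℂ] B)

/-- The base pair: the Banach algebra `A` together with the Banach `A`-bimodule `B`. -/
def basePair : APair where
  X := A
  Y := B
  mul := ContinuousLinearMap.mul ℂ A
  pl := πl
  pr := πr

/-!
Since `e` acts as the identity on `B^(n)`, the identity of `B^(n) = (B^(n-1))*` is
weak*-to-weak continuous. Then every functional on `B^(n)` is weak*-continuous, hence an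
evaluation at a point of `B^(n-1)`: so `B^(n-1)` is reflexive. Reflexivity passes from the dual
of a Banach space to the space itself (a functional separating a point of `W**` from the closed
subspace `W` would come from `W*`, and so vanish), which brings it down to `B`.
-/

section
variable {𝕜 V : Type*} [RCLike 𝕜] [NormedAddCommGroup V] [NormedSpace 𝕜 V]

theorem exists_inclusionInDoubleDual_eq_of_continuous_weakDual
    (G : StrongDual 𝕜 (StrongDual 𝕜 V)) (hG : Continuous fun ψ : WeakDual 𝕜 V => G ψ) :
    ∃ v : V, inclusionInDoubleDual 𝕜 V v = G := by
  obtain ⟨v, hv⟩ := LinearMap.dualEmbedding_surjective (topDualPairing 𝕜 V) ⟨G.toLinearMap, hG⟩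
  exact ⟨v, ContinuousLinearMap.ext fun ψ => DFunLike.congr_fun hv ψ⟩

theorem surjective_inclusionInDoubleDual_of_continuous_weakDual_toWeakSpace
    (h : Continuous fun ψ : WeakDual 𝕜 V => toWeakSpace 𝕜 (StrongDual 𝕜 V) ψ) :
    Function.Surjective (inclusionInDoubleDual 𝕜 V) := fun G =>
  exists_inclusionInDoubleDual_eq_of_continuous_weakDual G
    ((WeakBilin.eval_continuous (topDualPairing 𝕜 (StrongDual 𝕜 V)).flip G).comp h)

theorem LinearIsometry.exists_dual_forall_apply_eq_zero_of_notMem_range {F X : Type*}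
    [NormedAddCommGroup F] [NormedSpace 𝕜 F] [CompleteSpace F]
    [NormedAddCommGroup X] [NormedSpace 𝕜 X]
    (f : F →ₗᵢ[𝕜] StrongDual 𝕜 X) {x : StrongDual 𝕜 X} (hx : x ∉ Set.range f) :
    ∃ g : StrongDual 𝕜 (StrongDual 𝕜 X), (∀ y, g (f y) = 0) ∧ g x ≠ 0 := by
  -- Fixes the instance path along which the quotient below finds its normed structure.
  let _ : NormedAddCommGroup (StrongDual 𝕜 X) := inferInstance
  let S := LinearMap.range f.toLinearMap
  have : IsClosed (S : Set (StrongDual 𝕜 X)) :=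
    f.isometry.isUniformInducing.isComplete_range.isClosed
  have hxS : S.mkQL x ≠ 0 := by
    rwa [Submodule.mkQL_apply, Ne, Submodule.mkQ_apply, Submodule.Quotient.mk_eq_zero]
  obtain ⟨g, hg⟩ := SeparatingDual.exists_ne_zero (R := 𝕜) hxS
  refine ⟨g.comp S.mkQL, fun y => ?_, hg⟩
  have hy : S.mkQL (f y) = 0 := (Submodule.Quotient.mk_eq_zero S).mpr ⟨y, rfl⟩
  change g (S.mkQL (f y)) = 0
  rw [hy, map_zero]

theorem surjective_inclusionInDoubleDual_of_dual [CompleteSpace V]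
    (h : Function.Surjective (inclusionInDoubleDual 𝕜 (StrongDual 𝕜 V))) :
    Function.Surjective (inclusionInDoubleDual 𝕜 V) := by
  intro Φ
  by_contra hΦ
  change Φ ∉ Set.range (inclusionInDoubleDualLi 𝕜) at hΦ
  obtain ⟨g, hg, hgΦ⟩ :=
    (inclusionInDoubleDualLi 𝕜 (E := V)).exists_dual_forall_apply_eq_zero_of_notMem_range hΦ
  obtain ⟨f, rfl⟩ := h g
  have hf : f = 0 := ContinuousLinearMap.ext hg
  exact hgΦ (by rw [hf, map_zero]; rfl)

end

namespace APair

theorem surjective_inclusionInDoubleDual_of_dual_iter (P : APair) [CompleteSpace P.Y] :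
    ∀ k, Function.Surjective (inclusionInDoubleDual ℂ (StrongDual ℂ (P.iter k).Y)) →
      Function.Surjective (inclusionInDoubleDual ℂ P.Y)
  | 0, h => surjective_inclusionInDoubleDual_of_dual h
  | k + 1, h => P.surjective_inclusionInDoubleDual_of_dual_iter k
      (surjective_inclusionInDoubleDual_of_dual (surjective_inclusionInDoubleDual_of_dual h))

end APair

/-- Here `n = 2 * (j + 1)`: with `Q := (basePair A B πl πr).iter j` at level `n - 2`,
`A^(n) = (Q.X)**`, `B^(n) = (Q.Y)**`, and the left action of `A^(n)` on `B^(n)` is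
`adjB (adjB (adjB Q.pl))`. -/
theorem stmt13
    (j : ℕ)
    (e : StrongDual ℂ (StrongDual ℂ ((basePair A B πl πr).iter j).X))
    (hunit : ∀ b2 : StrongDual ℂ (StrongDual ℂ ((basePair A B πl πr).iter j).Y),
      adjB (adjB (adjB ((basePair A B πl πr).iter j).pl)) e b2 = b2)
    (hz : Continuous fun b2 : WeakDual ℂ (StrongDual ℂ ((basePair A B πl πr).iter j).Y) =>
      (adjB (adjB (adjB ((basePair A B πl πr).iter j).pl)) e b2 :
        WeakSpace ℂ (StrongDual ℂ (StrongDual ℂ ((basePair A B πl πr).iter j).Y)))) :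
    Function.Surjective (inclusionInDoubleDual ℂ B) := by
  have : CompleteSpace (basePair A B πl πr).Y := ‹CompleteSpace B›
  refine (basePair A B πl πr).surjective_inclusionInDoubleDual_of_dual_iter j
    (surjective_inclusionInDoubleDual_of_continuous_weakDual_toWeakSpace ?_)
  -- The `WeakSpace` ascription in `hz` is elaborated away: `hz` is continuity into the norm
  -- topology, which is finer than the weak one.
  exact (toWeakSpaceCLM ℂ _).continuous.comp (hz.congr hunit)

end
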